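/- arXiv:1806.00302 — 3 statements merged into one kernel-verified Lean document; each statement's English description precedes it below -/
import Mathlib

section
/- Let k ≥ 3 and 0 ≤ i ≤ k with 4 ≤ i ≤ k−4. If f(k,i−1) < m ≤ f(k,i) and f(k,k−i−1) < n ≤ f(k,k−i), where f(α,β) = α − 1 + C(max{β−1,2},2), then sg(K_{n,m}) = k. -/
/-- A selection of fixed geodesics between pairs of vertices of `S`:
each element of `P` is a walk whose endpoints lie in `S`, which is a shortest path,
with at most one walk per ordered pair of endpoints, and with the walks chosen for
the two orderings of a pair being reverses of each other. -/
def IsGeodesicSelection {V : Type*} (G : SimpleGraph V) (S : Set V)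
    (P : Set ((u : V) × (v : V) × G.Walk u v)) : Prop :=
  (∀ q ∈ P, q.1 ∈ S ∧ q.2.1 ∈ S ∧ q.2.2.IsPath ∧ q.2.2.length = G.dist q.1 q.2.1) ∧
  (∀ q ∈ P, ∀ q' ∈ P,
    (q.1 = q'.1 ∧ q.2.1 = q'.2.1 → q = q') ∧
    (q.1 = q'.2.1 ∧ q.2.1 = q'.1 → q.2.2.support = q'.2.2.support.reverse))

/-- `S` is a strong geodetic set of `G` if one can fix one shortest path between
each pair of vertices of `S` so that all vertices of `G` are covered. -/
def IsStrongGeodeticSet {V : Type*} (G : SimpleGraph V) (S : Set V) : Prop :=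
  ∃ P, IsGeodesicSelection G S P ∧ ∀ w : V, ∃ q ∈ P, w ∈ q.2.2.support

/-- The strong geodetic number: minimum size of a strong geodetic set. -/
noncomputable def strongGeodeticNumber {V : Type*} (G : SimpleGraph V) : ℕ :=
  sInf {k | ∃ S : Set V, S.ncard = k ∧ IsStrongGeodeticSet G S}

/-- `f(α,β) = α - 1 + C(max(β-1,2), 2)`. -/
def sgF (a b : ℕ) : ℕ := a - 1 + (max (b - 1) 2).choose 2

/-
In `K_{n,m}` every geodesic has length at most two, so a vertex outside a strong geodetic set
`S` is the middle vertex of a selected path joining two vertices of `S` on the other side, and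
distinct such vertices need distinct unordered pairs (the selection has one path per pair).
With `a` and `b` vertices of `S` on the two sides this gives `n ≤ a + C(b,2)` and
`m ≤ b + C(a,2)`; conversely, when these hold, assigning distinct pairs to the uncovered vertices
yields a strong geodetic set. The bounds on `m` and `n` force `a ≥ i` and `b ≥ k - i`, and
`a = i`, `b = k - i` satisfy both inequalities.
-/

open SimpleGraph Finset Function

namespace SimpleGraph

variable {V : Type*} {G : SimpleGraph V} {u v w : V}

lemma Walk.adj_adj_support_eq_of_length_le_two (p : G.Walk u v) (hp : p.length ≤ 2)
    (hw : w ∈ p.support) (hwu : w ≠ u) (hwv : w ≠ v) :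
    G.Adj u w ∧ G.Adj w v ∧ p.support = [u, w, v] := by
  match p with
  | .nil => simp_all
  | .cons _ .nil => simp_all
  | .cons (v := x) h (.cons h' .nil) =>
    obtain rfl : x = w := by simp_all
    exact ⟨h, h', rfl⟩
  | .cons _ (.cons _ (.cons _ _)) => simp at hp

lemma dist_le_two_of_adj_of_adj (h₁ : G.Adj u w) (h₂ : G.Adj w v) : G.dist u v ≤ 2 :=
  dist_le (.cons h₁ (.cons h₂ .nil))

lemma dist_eq_two_of_adj_of_adj (hne : u ≠ v) (hnadj : ¬G.Adj u v) (h₁ : G.Adj u w)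
    (h₂ : G.Adj w v) : G.dist u v = 2 :=
  (dist_le_two_of_adj_of_adj h₁ h₂).antisymm
    ((h₁.reachable.trans h₂.reachable).one_lt_dist_of_ne_of_not_adj hne hnadj)

end SimpleGraph

section StrongGeodetic

variable {V : Type*} {G : SimpleGraph V} {S : Set V}

lemma IsGeodesicSelection.middle_eq_of_ends_eq {P : Set ((u : V) × (v : V) × G.Walk u v)}
    (hP : IsGeodesicSelection G S P) {q q' : (u : V) × (v : V) × G.Walk u v} (hq : q ∈ P)
    (hq' : q' ∈ P) {t t' : V} (ht : q.2.2.support = [q.1, t, q.2.1])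
    (ht' : q'.2.2.support = [q'.1, t', q'.2.1]) (h : s(q.1, q.2.1) = s(q'.1, q'.2.1)) :
    t = t' := by
  rcases Sym2.eq_iff.1 h with hends | hends
  · have e := congrArg (fun r => r.2.2.support) ((hP.2 q hq q' hq').1 hends)
    simp_all
  · have e := (hP.2 q hq q' hq').2 hends
    simp_all

lemma IsStrongGeodeticSet.card_le_choose_two [DecidableEq V] (hS : IsStrongGeodeticSet G S)
    (hdiam : ∀ u v, G.dist u v ≤ 2) {T U : Finset V} (hT : ∀ t ∈ T, t ∉ S)
    (hU : ∀ t ∈ T, ∀ u ∈ S, G.Adj u t → u ∈ U) : #T ≤ (#U).choose 2 := by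
  obtain ⟨P, hP, hcover⟩ := hS
  have hmid : ∀ t ∈ T, ∃ q ∈ P, G.Adj q.1 t ∧ G.Adj t q.2.1 ∧
      q.2.2.support = [q.1, t, q.2.1] := by
    intro t ht
    obtain ⟨q, hq, htq⟩ := hcover t
    obtain ⟨hu, hv, -, hlen⟩ := hP.1 q hq
    exact ⟨q, hq, q.2.2.adj_adj_support_eq_of_length_le_two (hlen ▸ hdiam _ _) htq
      (ne_of_mem_of_not_mem hu (hT t ht)).symm (ne_of_mem_of_not_mem hv (hT t ht)).symm⟩
  rcases T.eq_empty_or_nonempty with rfl | ⟨t₀, -⟩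
  · simp
  have : Nonempty ((u : V) × (v : V) × G.Walk u v) := ⟨⟨t₀, t₀, .nil⟩⟩
  choose! q hqP hadj₁ hadj₂ hsupp using hmid
  calc #T ≤ #(U.offDiag.image Sym2.mk.uncurry) := by
        refine card_le_card_of_injOn (fun t => s((q t).1, (q t).2.1)) ?_ ?_
        · intro t ht
          have hnodup := (hP.1 _ (hqP t ht)).2.2.1.support_nodup
          rw [hsupp t ht] at hnodup
          refine mem_image.2 ⟨((q t).1, (q t).2.1), mem_offDiag.2 ⟨?_, ?_, ?_⟩, rfl⟩
          · exact hU t ht _ (hP.1 _ (hqP t ht)).1 (hadj₁ t ht)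
          · exact hU t ht _ (hP.1 _ (hqP t ht)).2.1 (hadj₂ t ht).symm
          · simp_all
        · exact fun t ht t' ht' =>
            hP.middle_eq_of_ends_eq (hqP t ht) (hqP t' ht') (hsupp t ht) (hsupp t' ht')
    _ = (#U).choose 2 := Sym2.card_image_offDiag U

lemma isStrongGeodeticSet_of_middles {ι : Type*} (src mid tgt : ι → V)
    (hsrc : ∀ c, src c ∈ S) (htgt : ∀ c, tgt c ∈ S)
    (hadj₁ : ∀ c, G.Adj (src c) (mid c)) (hadj₂ : ∀ c, G.Adj (mid c) (tgt c))
    (hne : ∀ c, src c ≠ tgt c) (hnadj : ∀ c, ¬G.Adj (src c) (tgt c))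
    (hinj : Injective fun c => s(src c, tgt c))
    (hcover : ∀ w ∉ S, ∃ c, mid c = w) : IsStrongGeodeticSet G S := by
  have hswap : ∀ c c', src c = tgt c' → tgt c = src c' → False := fun c c' h₁ h₂ => by
    obtain rfl : c = c' := hinj (by simp only [h₁, h₂, Sym2.eq_swap])
    exact hne c h₁
  -- The vertices of `S` themselves are covered by the trivial geodesics `z ⟶ z`.
  refine ⟨{q | (∃ z ∈ S, q = ⟨z, z, .nil⟩) ∨
      ∃ c, q = ⟨src c, tgt c, .cons (hadj₁ c) (.cons (hadj₂ c) .nil)⟩}, ⟨?_, ?_⟩, ?_⟩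
  · rintro q (⟨z, hz, rfl⟩ | ⟨c, rfl⟩)
    · exact ⟨hz, hz, .nil, by simp⟩
    · refine ⟨hsrc c, htgt c, ?_,
        (dist_eq_two_of_adj_of_adj (hne c) (hnadj c) (hadj₁ c) (hadj₂ c)).symm⟩
      simp [Walk.isPath_def, (hadj₁ c).ne, (hadj₂ c).ne, hne c]
  · rintro q (⟨z, hz, rfl⟩ | ⟨c, rfl⟩) q' (⟨z', hz', rfl⟩ | ⟨c', rfl⟩)
    · constructor <;> rintro ⟨rfl, -⟩ <;> simp
    · exact ⟨fun h => (hne c' (h.1.symm.trans h.2)).elim,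
        fun h => (hne c' (h.2.symm.trans h.1)).elim⟩
    · exact ⟨fun h => (hne c (h.1.trans h.2.symm)).elim,
        fun h => (hne c (h.1.trans h.2.symm)).elim⟩
    · refine ⟨fun h => ?_, fun h => (hswap c c' h.1 h.2).elim⟩
      obtain rfl : c = c' := hinj (congrArg₂ Sym2.mk h.1 h.2)
      rfl
  · intro w
    by_cases hw : w ∈ S
    · exact ⟨⟨w, w, .nil⟩, .inl ⟨w, hw, rfl⟩, by simp⟩
    · obtain ⟨c, rfl⟩ := hcover w hw
      exact ⟨_, .inr ⟨c, rfl⟩, by simp⟩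

end StrongGeodetic

lemma Finset.exists_offDiag_injective_sym2 {γ β : Type*} [Fintype γ] [DecidableEq β]
    (B : Finset β) (h : Fintype.card γ ≤ (#B).choose 2) :
    ∃ g : γ → β × β, (∀ c, g c ∈ B.offDiag) ∧ Injective fun c => s((g c).1, (g c).2) := by
  obtain ⟨e⟩ := Function.Embedding.nonempty_of_card_le (α := γ)
    (β := ↥(B.offDiag.image Sym2.mk.uncurry)) (by rwa [Fintype.card_coe, Sym2.card_image_offDiag])
  choose g hgB hg using fun c => mem_image.1 (e c).2
  exact ⟨g, hgB, fun c c' h => e.injective (Subtype.ext ((hg c).symm.trans (h.trans (hg c'))))⟩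

section CompleteBipartite

variable {α β : Type*}

lemma SimpleGraph.dist_completeBipartiteGraph_le_two [Nonempty α] [Nonempty β] (u v : α ⊕ β) :
    (completeBipartiteGraph α β).dist u v ≤ 2 := by
  obtain ⟨a⟩ := ‹Nonempty α›
  obtain ⟨b⟩ := ‹Nonempty β›
  rcases u with x | y <;> rcases v with x' | y'
  · exact dist_le_two_of_adj_of_adj (w := .inr b) (by simp) (by simp)
  · exact (dist_le (Adj.toWalk (by simp))).trans (by simp)
  · exact (dist_le (Adj.toWalk (by simp))).trans (by simp)
  · exact dist_le_two_of_adj_of_adj (w := .inl a) (by simp) (by simp)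

variable [DecidableEq α] [DecidableEq β]

lemma IsStrongGeodeticSet.card_left_le [Fintype α] [Nonempty α] [Nonempty β]
    {s : Finset (α ⊕ β)} (hs : IsStrongGeodeticSet (completeBipartiteGraph α β) s) :
    Fintype.card α ≤ #s.toLeft + (#s.toRight).choose 2 := by
  have hcompl := hs.card_le_choose_two dist_completeBipartiteGraph_le_two
    (T := s.toLeftᶜ.map .inl) (U := s.toRight.map .inr) (by simp) ?_
  · simp only [card_map] at hcompl
    have := card_add_card_compl s.toLeft
    omega
  · intro t ht u hu hadj
    obtain ⟨_, -, rfl⟩ := mem_map.1 ht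
    rcases u with x | y <;> simp_all

lemma IsStrongGeodeticSet.card_right_le [Fintype β] [Nonempty α] [Nonempty β]
    {s : Finset (α ⊕ β)} (hs : IsStrongGeodeticSet (completeBipartiteGraph α β) s) :
    Fintype.card β ≤ #s.toRight + (#s.toLeft).choose 2 := by
  have hcompl := hs.card_le_choose_two dist_completeBipartiteGraph_le_two
    (T := s.toRightᶜ.map .inr) (U := s.toLeft.map .inl) (by simp) ?_
  · simp only [card_map] at hcompl
    have := card_add_card_compl s.toRight
    omega
  · intro t ht u hu hadj
    obtain ⟨_, -, rfl⟩ := mem_map.1 ht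
    rcases u with x | y <;> simp_all

lemma isStrongGeodeticSet_completeBipartiteGraph_disjSum [Fintype α] [Fintype β]
    (A : Finset α) (B : Finset β)
    (hα : Fintype.card α ≤ #A + (#B).choose 2) (hβ : Fintype.card β ≤ #B + (#A).choose 2) :
    IsStrongGeodeticSet (completeBipartiteGraph α β) (A.disjSum B) := by
  obtain ⟨gL, hgL, hgL_inj⟩ := B.exists_offDiag_injective_sym2 (γ := ↥Aᶜ)
    (by rw [Fintype.card_coe, card_compl]; omega)
  obtain ⟨gR, hgR, hgR_inj⟩ := A.exists_offDiag_injective_sym2 (γ := ↥Bᶜ)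
    (by rw [Fintype.card_coe, card_compl]; omega)
  simp only [mem_offDiag] at hgL hgR
  refine isStrongGeodeticSet_of_middles (ι := ↥Aᶜ ⊕ ↥Bᶜ)
    (Sum.elim (fun x => .inr (gL x).1) (fun y => .inl (gR y).1))
    (Sum.elim (fun x => .inl x.1) (fun y => .inr y.1))
    (Sum.elim (fun x => .inr (gL x).2) (fun y => .inl (gR y).2)) ?_ ?_ ?_ ?_ ?_ ?_ ?_ ?_
  · rintro (x | y) <;> simp [hgL, hgR]
  · rintro (x | y) <;> simp [hgL, hgR]
  · rintro (x | y) <;> simp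
  · rintro (x | y) <;> simp
  · rintro (x | y) <;> simp [hgL, hgR]
  · rintro (x | y) <;> simp
  · rintro (x | y) (x' | y') h <;> simp only [Sum.elim_inl, Sum.elim_inr] at h
    · exact congrArg Sum.inl (hgL_inj (Sym2.map.injective Sum.inr_injective h))
    · simp at h
    · simp at h
    · exact congrArg Sum.inr (hgR_inj (Sym2.map.injective Sum.inl_injective h))
  · rintro (x | y) hw
    · exact ⟨.inl ⟨x, by simpa using hw⟩, rfl⟩
    · exact ⟨.inr ⟨y, by simpa using hw⟩, rfl⟩

end CompleteBipartite

lemma Nat.succ_choose_two (c : ℕ) : (c + 1).choose 2 = c + c.choose 2 := by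
  simpa using Nat.choose_succ_succ' c 1

lemma Nat.choose_two_le_add_choose_two {a c : ℕ} (h : a ≤ c + 1) :
    a.choose 2 ≤ a + c.choose 2 := by
  rcases h.lt_or_eq with h | rfl
  · exact (Nat.choose_le_choose 2 (Nat.le_of_lt_succ h)).trans le_add_self
  · rw [Nat.succ_choose_two]
    omega

lemma lt_of_sgF_lt {k j m a b : ℕ} (hm : sgF k j < m) (h : m ≤ b + a.choose 2)
    (hk : a + b < k) : j < a := by
  by_contra! ha
  have hmax : (j - 1).choose 2 ≤ (max (j - 1) 2).choose 2 :=
    Nat.choose_le_choose 2 (le_max_left _ _)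
  have hchoose := Nat.choose_two_le_add_choose_two (show a ≤ j - 1 + 1 by omega)
  unfold sgF at hm
  omega

lemma sgF_eq_sub_add_choose_two {k j : ℕ} (hj : 3 ≤ j) (hjk : j ≤ k) :
    sgF k j = k - j + j.choose 2 := by
  obtain ⟨l, rfl⟩ : ∃ l, j = l + 1 := ⟨j - 1, by omega⟩
  rw [sgF, Nat.add_sub_cancel, max_eq_left (by omega), Nat.succ_choose_two]
  omega

theorem sg_eq_of_rectangle_general (k i n m : ℕ)
    (hi4 : 4 ≤ i) (hik4 : i ≤ k - 4)
    (hm1 : sgF k (i - 1) < m) (hm2 : m ≤ sgF k i)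
    (hn1 : sgF k (k - i - 1) < n) (hn2 : n ≤ sgF k (k - i)) :
    strongGeodeticNumber (completeBipartiteGraph (Fin n) (Fin m)) = k := by
  have hkm : k ≤ m := by unfold sgF at hm1; omega
  have hkn : k ≤ n := by unfold sgF at hn1; omega
  have : Nonempty (Fin n) := ⟨⟨0, by omega⟩⟩
  have : Nonempty (Fin m) := ⟨⟨0, by omega⟩⟩
  obtain ⟨A, -, hA⟩ := exists_subset_card_eq (s := (univ : Finset (Fin n))) (n := i)
    (by rw [card_univ, Fintype.card_fin]; omega)
  obtain ⟨B, -, hB⟩ := exists_subset_card_eq (s := (univ : Finset (Fin m))) (n := k - i)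
    (by rw [card_univ, Fintype.card_fin]; omega)
  refine IsLeast.csInf_eq
    ⟨⟨_, ?_, isStrongGeodeticSet_completeBipartiteGraph_disjSum A B ?_ ?_⟩, ?_⟩
  · rw [Set.ncard_coe_finset, card_disjSum]
    omega
  · have := sgF_eq_sub_add_choose_two (k := k) (j := k - i) (by omega) (by omega)
    rw [Fintype.card_fin, hA, hB]
    omega
  · have := sgF_eq_sub_add_choose_two (k := k) (j := i) (by omega) (by omega)
    rw [Fintype.card_fin, hA, hB]
    omega
  · rintro _ ⟨T, rfl, hT⟩
    obtain ⟨s, rfl⟩ := T.toFinite.exists_finset_coe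
    rw [Set.ncard_coe_finset, ← card_toLeft_add_card_toRight]
    by_contra! hsmall
    have hleft := lt_of_sgF_lt hm1 (by simpa using hT.card_right_le) hsmall
    have hright := lt_of_sgF_lt hn1 (by simpa using hT.card_left_le) (by omega)
    omega

theorem sg_eq_of_rectangle (k i n m : ℕ) (hk : 3 ≤ k) (hik : i ≤ k)
    (hi4 : 4 ≤ i) (hik4 : i ≤ k - 4)
    (hm1 : sgF k (i - 1) < m) (hm2 : m ≤ sgF k i)
    (hn1 : sgF k (k - i - 1) < n) (hn2 : n ≤ sgF k (k - i)) :
    strongGeodeticNumber (completeBipartiteGraph (Fin n) (Fin m)) = k :=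
  sg_eq_of_rectangle_general k i n m hi4 hik4 hm1 hm2 hn1 hn2
end

section
/- For positive integers k and m such that (k+1) divides 2m, the strong geodetic number of the complete multipartite graph with m parts each of size k equals 2mk/(k+1). -/
/-!
Every geodesic of `K_{⟨k^m⟩}` has length at most two, so a vertex outside a strong geodetic
set `S` can only be covered as the midpoint of a fixed geodesic between two non-adjacent
vertices of `S`, that is, two vertices of the same part, and distinct such midpoints need
distinct unordered pairs. A vertex of `S` has at most `k - 1` partners in its part, whence
`2 (mk - |S|) ≤ (k - 1) |S|`, i.e. `|S| ≥ 2mk/(k+1)`. Conversely, if `S` consists of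
`a = 2m/(k+1)` whole parts, these contain `a * (k choose 2) = (m - a) k` same-part pairs:
exactly one for each vertex outside `S`.
-/

theorem Set.ncard_setOf_fst_mem_le_mul {α β : Type*} [Finite α] [Finite β] {S : Set α}
    {R : α → β → Prop} {d : ℕ} (hR : ∀ a, {b | R a b}.ncard ≤ d) :
    {p : α × β | p.1 ∈ S ∧ R p.1 p.2}.ncard ≤ d * S.ncard := by
  set T := S.toFinite.toFinset
  have hsub : {p : α × β | p.1 ∈ S ∧ R p.1 p.2} ⊆ ⋃ a ∈ T, Prod.mk a '' {b | R a b} := by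
    rintro ⟨a, b⟩ ⟨ha, hab⟩
    exact Set.mem_biUnion (S.toFinite.mem_toFinset.2 ha) ⟨b, hab, rfl⟩
  calc {p : α × β | p.1 ∈ S ∧ R p.1 p.2}.ncard
      ≤ (⋃ a ∈ T, Prod.mk a '' {b | R a b}).ncard := Set.ncard_le_ncard hsub
    _ ≤ ∑ a ∈ T, (Prod.mk a '' {b | R a b}).ncard := T.set_ncard_biUnion_le _
    _ ≤ T.card • d := Finset.sum_le_card_nsmul _ _ _ fun a _ => by
        rw [Set.ncard_image_of_injective _ (Prod.mk_right_injective a)]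
        exact hR a
    _ = d * S.ncard := by rw [Set.ncard_eq_toFinset_card S, smul_eq_mul, mul_comm]

theorem Set.ncard_preimage_sigma_fst {ι α : Type*} (A : Set ι) :
    (Sigma.fst ⁻¹' A : Set (Σ _ : ι, α)).ncard = A.ncard * Nat.card α := by
  rw [← Nat.card_coe_set_eq, ← Nat.card_coe_set_eq, ← Nat.card_prod]
  exact Nat.card_congr ((Equiv.subtypeSigmaEquiv _ (· ∈ A)).trans (Equiv.sigmaEquivProd _ _))

namespace SimpleGraph

variable {V : Type*} {G : SimpleGraph V}

theorem Walk.support_eq_of_length_le_two {u v w : V} (p : G.Walk u v) (hp : p.length ≤ 2)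
    (hw : w ∈ p.support) (hwu : w ≠ u) (hwv : w ≠ v) : p.support = [u, w, v] := by
  rcases p with _ | ⟨_, _ | ⟨_, _ | ⟨_, q⟩⟩⟩
  · simp_all
  · simp_all
  · simp_all [eq_comm]
  · simp at hp

theorem dist_eq_two_of_adj_of_adj_s10 {u v w : V} (huw : G.Adj u w) (hwv : G.Adj w v)
    (huv : Gᶜ.Adj u v) : G.dist u v = 2 := by
  have hle : G.dist u v ≤ 2 := by simpa using dist_le (huw.toWalk.append hwv.toWalk)
  have h0 : G.dist u v ≠ 0 :=
    (Reachable.pos_dist_of_ne ⟨huw.toWalk.append hwv.toWalk⟩ huv.ne).ne'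
  have h1 : G.dist u v ≠ 1 := fun h => huv.2 (dist_eq_one_iff_adj.mp h)
  omega

theorem Walk.support_eq_of_length_eq_dist (hdiam : ∀ u v, G.Reachable u v → G.dist u v ≤ 2)
    {u v w : V} (p : G.Walk u v) (hp : p.length = G.dist u v)
    (hw : w ∈ p.support) (hwu : w ≠ u) (hwv : w ≠ v) :
    p.support = [u, w, v] ∧ Gᶜ.Adj u v := by
  have hsupp := p.support_eq_of_length_le_two (hp ▸ hdiam u v ⟨p⟩) hw hwu hwv
  have hlen : G.dist u v = 2 := by
    have := p.length_support
    rw [hsupp] at this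
    simp at this
    omega
  refine ⟨hsupp, (compl_adj G u v).2 ⟨?_, fun h => ?_⟩⟩
  · rintro rfl
    simp at hlen
  · rw [dist_eq_one_iff_adj.2 h] at hlen
    omega

end SimpleGraph

open SimpleGraph

section

variable {V : Type*} {G : SimpleGraph V}

theorem strongGeodeticNumber_eq {n : ℕ}
    (h : ∃ S : Set V, S.ncard = n ∧ IsStrongGeodeticSet G S)
    (hle : ∀ S : Set V, IsStrongGeodeticSet G S → n ≤ S.ncard) : strongGeodeticNumber G = n :=
  le_antisymm (Nat.sInf_le h) (le_csInf ⟨n, h⟩ fun _ ⟨S, hS, hgeo⟩ => hS ▸ hle S hgeo)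

theorem IsStrongGeodeticSet.exists_injOn_midpoint_pairs {S : Set V}
    (hdiam : ∀ u v, G.Reachable u v → G.dist u v ≤ 2) (hS : IsStrongGeodeticSet G S) :
    ∃ f : V → V × V, (∀ w ∉ S, (f w).1 ∈ S ∧ (f w).2 ∈ S ∧ Gᶜ.Adj (f w).1 (f w).2) ∧
      Set.InjOn (fun w => s((f w).1, (f w).2)) Sᶜ := by
  obtain ⟨P, ⟨hgeo, hsel⟩, hcov⟩ := hS
  choose q hqP hwq using hcov
  have hmid : ∀ w ∉ S, (q w).2.2.support = [(q w).1, w, (q w).2.1] ∧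
      Gᶜ.Adj (q w).1 (q w).2.1 := by
    intro w hw
    obtain ⟨hu, hv, -, hlen⟩ := hgeo _ (hqP w)
    exact Walk.support_eq_of_length_eq_dist hdiam _ hlen (hwq w)
      (fun h => hw (h ▸ hu)) (fun h => hw (h ▸ hv))
  refine ⟨fun w => ((q w).1, (q w).2.1),
    fun w hw => ⟨(hgeo _ (hqP w)).1, (hgeo _ (hqP w)).2.1, (hmid w hw).2⟩, ?_⟩
  -- the selection fixes one geodesic per unordered pair, so the pair determines its midpoint
  intro w hw w' hw' h
  have hsupp := (hmid w hw).1
  have hsupp' := (hmid w' hw').1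
  rcases Sym2.eq_iff.1 h with h | h
  · have hq := (hsel _ (hqP w) _ (hqP w')).1 h
    rw [hq, hsupp'] at hsupp
    simp_all
  · have hrev := (hsel _ (hqP w) _ (hqP w')).2 h
    rw [hsupp, hsupp'] at hrev
    simp_all

theorem two_mul_ncard_le_of_injOn_sym2 [Finite V] {T S : Set V} {d : ℕ} (f : V → V × V)
    (hf : ∀ w ∈ T, (f w).1 ∈ S ∧ (f w).2 ∈ S ∧ G.Adj (f w).1 (f w).2)
    (hinj : Set.InjOn (fun w => s((f w).1, (f w).2)) T)
    (hdeg : ∀ u, (G.neighborSet u).ncard ≤ d) : 2 * T.ncard ≤ d * S.ncard := by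
  -- each `w ∈ T` is counted twice, once for each orientation of its pair
  let g : V × Bool → V × V := fun x => if x.2 then f x.1 else (f x.1).swap
  have hmaps : ∀ x ∈ T ×ˢ (Set.univ : Set Bool),
      g x ∈ {p : V × V | p.1 ∈ S ∧ G.Adj p.1 p.2} := by
    rintro ⟨w, _ | _⟩ ⟨hw, -⟩
    · exact ⟨(hf w hw).2.1, (hf w hw).2.2.symm⟩
    · exact ⟨(hf w hw).1, (hf w hw).2.2⟩
  have hginj : Set.InjOn g (T ×ˢ Set.univ) := by
    rintro ⟨w, b⟩ ⟨hw, -⟩ ⟨w', b'⟩ ⟨hw', -⟩ h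
    have hne := (hf w hw).2.2.ne
    cases b <;> cases b' <;> simp only [g, Prod.ext_iff, Prod.fst_swap, Prod.snd_swap,
      Bool.false_eq_true, if_true, if_false] at h
    all_goals obtain rfl := hinj hw hw' (Sym2.eq_iff.2 (by tauto))
    · rfl
    · exact absurd h.2 hne
    · exact absurd h.1 hne
    · rfl
  calc 2 * T.ncard = (T ×ˢ (Set.univ : Set Bool)).ncard := by
        rw [Set.ncard_prod, Set.ncard_univ, Nat.card_eq_fintype_card, Fintype.card_bool,
          mul_comm]
    _ ≤ {p : V × V | p.1 ∈ S ∧ G.Adj p.1 p.2}.ncard :=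
        Set.ncard_le_ncard_of_injOn g hmaps hginj
    _ ≤ d * S.ncard := Set.ncard_setOf_fst_mem_le_mul hdeg

theorem IsStrongGeodeticSet.two_mul_ncard_compl_le [Finite V] {S : Set V} {d : ℕ}
    (hdiam : ∀ u v, G.Reachable u v → G.dist u v ≤ 2)
    (hdeg : ∀ u, (Gᶜ.neighborSet u).ncard ≤ d) (hS : IsStrongGeodeticSet G S) :
    2 * Sᶜ.ncard ≤ d * S.ncard :=
  have ⟨f, hf, hinj⟩ := hS.exists_injOn_midpoint_pairs hdiam
  two_mul_ncard_le_of_injOn_sym2 f hf hinj hdeg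

theorem isStrongGeodeticSet_of_midpoints {S : Set V} (f : ↥Sᶜ → V × V)
    (hS : ∀ w, (f w).1 ∈ S ∧ (f w).2 ∈ S) (hadj : ∀ w, G.Adj (f w).1 w ∧ G.Adj w (f w).2)
    (hcompl : ∀ w, Gᶜ.Adj (f w).1 (f w).2)
    (hinj : Function.Injective fun w => s((f w).1, (f w).2)) : IsStrongGeodeticSet G S := by
  let path (w : ↥Sᶜ) : G.Walk (f w).1 (f w).2 := .cons (hadj w).1 (.cons (hadj w).2 .nil)
  have hne (w : ↥Sᶜ) : (f w).1 ≠ (f w).2 := (hcompl w).ne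
  refine ⟨{q | ∃ u ∈ S, q = ⟨u, u, .nil⟩} ∪ Set.range fun w => ⟨(f w).1, (f w).2, path w⟩,
    ⟨?_, ?_⟩, ?_⟩
  · rintro _ (⟨u, hu, rfl⟩ | ⟨w, rfl⟩)
    · exact ⟨hu, hu, .nil, by simp⟩
    · refine ⟨(hS w).1, (hS w).2, ?_, (dist_eq_two_of_adj_of_adj_s10 (hadj w).1 (hadj w).2
        (hcompl w)).symm⟩
      simp [path, Walk.isPath_def, (hadj w).1.ne, (hadj w).2.ne, hne w]
  · rintro _ (⟨u, hu, rfl⟩ | ⟨w, rfl⟩) _ (⟨u', hu', rfl⟩ | ⟨w', rfl⟩)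
    · constructor <;> rintro ⟨rfl, -⟩ <;> simp
    · constructor <;> rintro ⟨h₁, h₂⟩ <;> exact absurd (by simp_all) (hne w')
    · constructor <;> rintro ⟨h₁, h₂⟩ <;> exact absurd (by simp_all) (hne w)
    · constructor
      · rintro ⟨h₁, h₂⟩
        obtain rfl := hinj (Sym2.eq_iff.2 (Or.inl ⟨h₁, h₂⟩))
        rfl
      · rintro ⟨h₁, h₂⟩
        obtain rfl := hinj (Sym2.eq_iff.2 (Or.inr ⟨h₁, h₂⟩))
        exact absurd h₁ (hne w)
  · intro v
    by_cases hv : v ∈ S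
    · exact ⟨⟨v, v, .nil⟩, .inl ⟨v, hv, rfl⟩, by simp⟩
    · exact ⟨_, .inr ⟨⟨v, hv⟩, rfl⟩, by simp [path]⟩

end

namespace SimpleGraph.completeMultipartiteGraph

variable {ι : Type*} {V : ι → Type*}

theorem compl_adj_iff {u v : Σ i, V i} :
    (completeMultipartiteGraph V)ᶜ.Adj u v ↔ u ≠ v ∧ u.1 = v.1 := by
  simp [compl_adj]

theorem dist_le_two {u v : Σ i, V i} (h : (completeMultipartiteGraph V).Reachable u v) :
    (completeMultipartiteGraph V).dist u v ≤ 2 := by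
  by_cases huv : u = v
  · simp [huv]
  by_cases hpart : u.1 = v.1
  · obtain ⟨_ | ⟨hub, -⟩⟩ := h
    · exact absurd rfl huv
    · have hbv : (completeMultipartiteGraph V).Adj _ v := hpart ▸ (Ne.symm hub : _)
      simpa using dist_le (hub.toWalk.append hbv.toWalk)
  · exact (dist_eq_one_iff_adj.2 hpart).le.trans one_le_two

theorem ncard_compl_neighborSet (u : Σ i, V i) [Finite (V u.1)] :
    ((completeMultipartiteGraph V)ᶜ.neighborSet u).ncard = Nat.card (V u.1) - 1 := by
  have : (completeMultipartiteGraph V)ᶜ.neighborSet u = Sigma.mk u.1 '' {u.2}ᶜ := by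
    ext ⟨i, x⟩
    simp only [mem_neighborSet, compl_adj_iff, Set.mem_image, Set.mem_compl_singleton_iff]
    constructor
    · rintro ⟨hne, rfl⟩
      exact ⟨x, fun h => hne (by rw [h]), rfl⟩
    · rintro ⟨y, hy, h⟩
      cases h
      exact ⟨fun h => hy (eq_of_heq (Sigma.mk.inj_iff.1 h).2).symm, rfl⟩
  rw [this, Set.ncard_image_of_injective _ sigma_mk_injective, Set.ncard_compl,
    Set.ncard_singleton]

theorem isStrongGeodeticSet_preimage_fst [Finite ι] [∀ i, Finite (V i)]
    [∀ i, LinearOrder (V i)] (A : Set ι)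
    (hcard : Nat.card ↥(Sigma.fst ⁻¹' A : Set (Σ i, V i))ᶜ ≤
      Nat.card (Σ i : A, {p : V i × V i // p.1 < p.2})) :
    IsStrongGeodeticSet (completeMultipartiteGraph V) (Sigma.fst ⁻¹' A) := by
  have := Fintype.ofFinite ↥(Sigma.fst ⁻¹' A : Set (Σ i, V i))ᶜ
  have := Fintype.ofFinite (Σ i : A, {p : V i × V i // p.1 < p.2})
  rw [Nat.card_eq_fintype_card, Nat.card_eq_fintype_card] at hcard
  obtain ⟨e⟩ := Function.Embedding.nonempty_of_card_le hcard
  refine isStrongGeodeticSet_of_midpoints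
    (fun w => (⟨(e w).1, (e w).2.1.1⟩, ⟨(e w).1, (e w).2.1.2⟩))
    (fun w => ⟨(e w).1.2, (e w).1.2⟩)
    (fun w => ⟨ne_of_mem_of_not_mem (e w).1.2 w.2, (ne_of_mem_of_not_mem (e w).1.2 w.2).symm⟩)
    (fun w => compl_adj_iff.2 ⟨?_, rfl⟩) ?_
  · exact sigma_mk_injective.ne (e w).2.2.ne
  · have hpair_inj : ∀ a b : Σ i : A, {p : V i × V i // p.1 < p.2},
        s((⟨a.1, a.2.1.1⟩ : Σ i, V i), ⟨a.1, a.2.1.2⟩) = s(⟨b.1, b.2.1.1⟩, ⟨b.1, b.2.1.2⟩) →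
          a = b := by
      rintro ⟨i, ⟨x, y⟩, hxy⟩ ⟨j, ⟨x', y'⟩, hxy'⟩ h
      simp only [Sym2.eq_iff, Sigma.mk.inj_iff] at h
      obtain rfl : i = j := Subtype.ext (h.elim (·.1.1) (·.1.1))
      simp only [heq_iff_eq, true_and] at h
      rcases h with ⟨rfl, rfl⟩ | ⟨rfl, rfl⟩
      · rfl
      · exact absurd (hxy.trans hxy') (lt_irrefl _)
    exact fun w w' h => e.injective (hpair_inj _ _ h)

theorem two_mul_mul_le_succ_mul_ncard {m k : ℕ} {S : Set (Σ _ : Fin m, Fin k)}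
    (hS : IsStrongGeodeticSet (completeMultipartiteGraph fun _ : Fin m => Fin k) S) :
    2 * m * k ≤ (k + 1) * S.ncard := by
  have hcompl := hS.two_mul_ncard_compl_le (fun _ _ => dist_le_two)
    (fun u => (ncard_compl_neighborSet u).le)
  have hsum := Set.ncard_add_ncard_compl S
  simp only [Nat.card_eq_fintype_card, Fintype.card_sigma, Fintype.card_fin,
    Finset.sum_const, Finset.card_univ, smul_eq_mul] at hcompl hsum
  rcases k with _ | k
  · simp
  · simp only [Nat.add_sub_cancel] at hcompl
    nlinarith

theorem exists_isStrongGeodeticSet_ncard_eq {m k a : ℕ} (hk : 0 < k)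
    (ha : 2 * m = (k + 1) * a) :
    ∃ S, S.ncard = a * k ∧
      IsStrongGeodeticSet (completeMultipartiteGraph fun _ : Fin m => Fin k) S := by
  have ham : a ≤ m := by nlinarith
  set A := Set.range (Fin.castLE ham)
  have hA : A.ncard = a := by
    rw [Set.ncard_range_of_injective (Fin.castLE_injective ham), Nat.card_fin]
  refine ⟨Sigma.fst ⁻¹' A, by rw [Set.ncard_preimage_sigma_fst, hA, Nat.card_fin],
    isStrongGeodeticSet_preimage_fst A ?_⟩
  rw [Nat.card_coe_set_eq, ← Set.preimage_compl, Set.ncard_preimage_sigma_fst, Set.ncard_compl,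
    hA, Nat.card_congr (Equiv.sigmaEquivProd _ _), Nat.card_prod, Nat.card_coe_set_eq, hA]
  simp only [Nat.card_eq_fintype_card, Fintype.card_subtype, Fintype.card_product_filter_lt,
    Fintype.card_fin]
  have hchoose : 2 * k.choose 2 = k * (k - 1) := by
    rw [Nat.choose_two_right, Nat.mul_div_cancel' (Nat.even_mul_pred_self k).two_dvd]
  obtain ⟨n, rfl⟩ : ∃ n, k = n + 1 := ⟨k - 1, by omega⟩
  obtain ⟨t, rfl⟩ := Nat.exists_eq_add_of_le ham
  simp only [Nat.add_sub_cancel_left, Nat.add_sub_cancel] at hchoose ⊢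
  nlinarith

end SimpleGraph.completeMultipartiteGraph

theorem sg_balanced_multipartite_general (k m : ℕ) (hk : 0 < k)
    (hdvd : (k + 1) ∣ 2 * m) :
    strongGeodeticNumber (SimpleGraph.completeMultipartiteGraph (fun _ : Fin m => Fin k)) =
      2 * m * k / (k + 1) := by
  obtain ⟨a, ha⟩ := hdvd
  have hval : 2 * m * k / (k + 1) = a * k := by
    rw [ha, mul_assoc, Nat.mul_div_cancel_left _ k.succ_pos]
  rw [hval]
  refine strongGeodeticNumber_eq
    (completeMultipartiteGraph.exists_isStrongGeodeticSet_ncard_eq hk ha) fun S hS => ?_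
  have hlower := completeMultipartiteGraph.two_mul_mul_le_succ_mul_ncard hS
  rw [ha, mul_assoc] at hlower
  exact Nat.le_of_mul_le_mul_left hlower k.succ_pos

theorem sg_balanced_multipartite (k m : ℕ) (hk : 0 < k) (hm : 0 < m)
    (hdvd : (k + 1) ∣ 2 * m) :
    strongGeodeticNumber (SimpleGraph.completeMultipartiteGraph (fun _ : Fin m => Fin k)) =
      2 * m * k / (k + 1) :=
  sg_balanced_multipartite_general k m hk hdvd
end

section
/- For positive integers k and m, sg(K_{⟨k^m⟩}) ≥ ⌈2km/(k+1)⌉, where K_{⟨k^m⟩} is the complete multipartite graph with m parts each of size k. -/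
/-!
A vertex `w` outside a strong geodetic set `S` is an inner vertex of some chosen geodesic, and in
a complete multipartite graph such a geodesic is `u - w - v` with `u ≠ v` in one part. The chosen
geodesic between `u` and `v` is unique up to reversal, so `w` is determined by `s(u, v)`. Hence,
if `S` meets part `i` in `sᵢ ≤ k` vertices, `k * m - #S ≤ ∑ᵢ sᵢ.choose 2 ≤ #S * (k - 1) / 2`.
-/

open SimpleGraph Finset

lemma SimpleGraph.Walk.support_eq_of_length_le_two_s11 {V : Type*} {G : SimpleGraph V} {u v w : V}
    (p : G.Walk u v) (hp : p.length ≤ 2) (hw : w ∈ p.support) (hwu : w ≠ u) (hwv : w ≠ v) :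
    p.support = [u, w, v] := by
  match p, hp with
  | .nil, _ => simp_all
  | .cons _ .nil, _ => simp_all
  | .cons _ (.cons _ .nil), _ => simp_all
  | .cons _ (.cons _ (.cons _ _)), hp => simp at hp

lemma IsGeodesicSelection.support_eq_or_eq_reverse {V : Type*} {G : SimpleGraph V} {S : Set V}
    {P : Set ((u : V) × (v : V) × G.Walk u v)} (hP : IsGeodesicSelection G S P)
    {q q' : (u : V) × (v : V) × G.Walk u v} (hq : q ∈ P) (hq' : q' ∈ P)
    (h : s(q.1, q.2.1) = s(q'.1, q'.2.1)) :
    q.2.2.support = q'.2.2.support ∨ q.2.2.support = q'.2.2.support.reverse := by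
  rcases Sym2.eq_iff.1 h with h | h
  · exact .inl (by rw [(hP.2 q hq q' hq').1 h])
  · exact .inr ((hP.2 q hq q' hq').2 h)

lemma isStrongGeodeticSet_univ {V : Type*} (G : SimpleGraph V) :
    IsStrongGeodeticSet G Set.univ := by
  refine ⟨Set.range fun u => ⟨u, u, .nil⟩, ⟨?_, ?_⟩, fun w => ⟨⟨w, w, .nil⟩, ⟨w, rfl⟩, by simp⟩⟩
  · rintro _ ⟨u, rfl⟩
    simp
  · rintro _ ⟨u, rfl⟩ _ ⟨u', rfl⟩
    constructor <;> rintro ⟨rfl, -⟩ <;> rfl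

lemma exists_isStrongGeodeticSet_card_eq {V : Type*} [Finite V] (G : SimpleGraph V) :
    ∃ S : Finset V, IsStrongGeodeticSet G S ∧ #S = strongGeodeticNumber G := by
  have hmem : strongGeodeticNumber G ∈ {k | ∃ S : Set V, S.ncard = k ∧ IsStrongGeodeticSet G S} :=
    Nat.sInf_mem ⟨_, Set.univ, rfl, isStrongGeodeticSet_univ G⟩
  obtain ⟨S, hcard, hS⟩ := hmem
  obtain ⟨S, rfl⟩ := (Set.toFinite S).exists_finset_coe
  exact ⟨S, hS, by rw [← Set.ncard_coe_finset, hcard]⟩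

lemma two_mul_choose_two_add_two_mul_le {n k : ℕ} (h : n ≤ k) :
    2 * n.choose 2 + 2 * n ≤ n * (k + 1) := by
  rw [Nat.choose_two_right, Nat.mul_div_cancel' (Nat.even_mul_pred_self n).two_dvd]
  cases n with
  | zero => simp
  | succ n => simp only [Nat.add_sub_cancel]; nlinarith

lemma Finset.card_filter_fst_eq_le {ι : Type*} [DecidableEq ι] {V : ι → Type*} (i : ι)
    [Fintype (V i)] (S : Finset (Σ i, V i)) : #{v ∈ S | v.1 = i} ≤ Fintype.card (V i) :=
  calc #{v ∈ S | v.1 = i}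
    _ ≤ #(univ.map (Function.Embedding.sigmaMk (β := V) i)) := card_le_card fun v hv => by
        obtain ⟨j, x⟩ := v
        obtain rfl := (mem_filter.1 hv).2
        simp
    _ = Fintype.card (V i) := by simp

lemma SimpleGraph.completeMultipartiteGraph.dist_le_two_s11 {ι : Type*} {V : ι → Type*}
    {u v : Σ i, V i} (h : (completeMultipartiteGraph V).Reachable u v) :
    (completeMultipartiteGraph V).dist u v ≤ 2 := by
  obtain ⟨p⟩ := h
  cases p with
  | nil => simp
  | @cons _ b _ hub _ =>
    by_cases huv : u.1 = v.1
    · have hbv : (completeMultipartiteGraph V).Adj b v := by simpa [huv] using hub.symm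
      simpa using dist_le (.cons hub (.cons hbv .nil))
    · exact (dist_le (.cons (show (completeMultipartiteGraph V).Adj u v from huv) .nil)).trans
        (by simp)

lemma SimpleGraph.completeMultipartiteGraph.support_eq_of_length_eq_dist {ι : Type*}
    {V : ι → Type*} {u v w : Σ i, V i} (p : (completeMultipartiteGraph V).Walk u v)
    (hp : p.length = (completeMultipartiteGraph V).dist u v) (hw : w ∈ p.support)
    (hwu : w ≠ u) (hwv : w ≠ v) :
    u.1 = v.1 ∧ u ≠ v ∧ p.support = [u, w, v] := by
  have hsupp := p.support_eq_of_length_le_two_s11 (hp ▸ dist_le_two_s11 ⟨p⟩) hw hwu hwv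
  have hdist : (completeMultipartiteGraph V).dist u v = 2 := by
    simpa [hsupp, ← hp] using p.length_support
  refine ⟨?_, ?_, hsupp⟩
  · by_contra huv
    simp [dist_eq_one_iff_adj.2 (show (completeMultipartiteGraph V).Adj u v from huv)] at hdist
  · rintro rfl
    simp at hdist

section Multipartite

variable {ι : Type*} [Fintype ι] [DecidableEq ι] {V : ι → Type*} [∀ i, Fintype (V i)]
  [∀ i, DecidableEq (V i)] {S : Finset (Σ i, V i)}

lemma IsStrongGeodeticSet.card_compl_le_sum_choose_two
    (hS : IsStrongGeodeticSet (completeMultipartiteGraph V) S) :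
    #Sᶜ ≤ ∑ i, (#{v ∈ S | v.1 = i}).choose 2 := by
  obtain ⟨P, hP, hcov⟩ := hS
  choose q hqP hwq using hcov
  have hq : ∀ w ∉ S, (q w).1.1 = (q w).2.1.1 ∧ (q w).1 ≠ (q w).2.1 ∧
      (q w).2.2.support = [(q w).1, w, (q w).2.1] := fun w hw => by
    obtain ⟨hu, hv, -, hd⟩ := hP.1 _ (hqP w)
    exact completeMultipartiteGraph.support_eq_of_length_eq_dist _ hd (hwq w)
      (ne_of_mem_of_not_mem hu hw).symm (ne_of_mem_of_not_mem hv hw).symm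
  calc #Sᶜ
    _ ≤ #(univ.biUnion fun i => {v ∈ S | v.1 = i}.offDiag.image Sym2.mk.uncurry) := by
      refine card_le_card_of_injOn (fun w => s((q w).1, (q w).2.1)) ?_ ?_
      · intro w hw
        obtain ⟨hpart, hne, -⟩ := hq w (by simpa using hw)
        obtain ⟨hu, hv, -⟩ := hP.1 _ (hqP w)
        simp only [coe_biUnion, coe_image, coe_offDiag, coe_filter, Set.mem_iUnion]
        exact ⟨(q w).1.1, mem_coe.2 (mem_univ _), ((q w).1, (q w).2.1),
          ⟨⟨hu, rfl⟩, ⟨hv, hpart.symm⟩, hne⟩, rfl⟩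
      · intro w hw w' hw' h
        have hsupp := hP.support_eq_or_eq_reverse (hqP w) (hqP w') h
        rw [(hq w (by simpa using hw)).2.2, (hq w' (by simpa using hw')).2.2] at hsupp
        simp only [List.reverse_cons, List.reverse_nil, List.nil_append, List.cons_append,
          List.cons.injEq, and_true] at hsupp
        rcases hsupp with ⟨-, rfl, -⟩ | ⟨-, rfl, -⟩ <;> rfl
    _ ≤ ∑ i, #({v ∈ S | v.1 = i}.offDiag.image Sym2.mk.uncurry) := card_biUnion_le
    _ = ∑ i, (#{v ∈ S | v.1 = i}).choose 2 := by simp only [Sym2.card_image_offDiag]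

lemma IsStrongGeodeticSet.two_mul_card_le {k : ℕ} (hV : ∀ i, Fintype.card (V i) ≤ k)
    (hS : IsStrongGeodeticSet (completeMultipartiteGraph V) S) :
    2 * Fintype.card (Σ i, V i) ≤ #S * (k + 1) := by
  have hfiber : #S = ∑ i, #{v ∈ S | v.1 = i} := card_eq_sum_card_fiberwise fun _ _ => mem_univ _
  calc 2 * Fintype.card (Σ i, V i)
    _ = 2 * #Sᶜ + 2 * #S := by rw [← card_compl_add_card S]; ring
    _ ≤ ∑ i, (2 * (#{v ∈ S | v.1 = i}).choose 2 + 2 * #{v ∈ S | v.1 = i}) := by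
      rw [sum_add_distrib, ← mul_sum, ← mul_sum, ← hfiber]
      gcongr
      exact hS.card_compl_le_sum_choose_two
    _ ≤ ∑ i, #{v ∈ S | v.1 = i} * (k + 1) := sum_le_sum fun i _ =>
      two_mul_choose_two_add_two_mul_le ((card_filter_fst_eq_le i S).trans (hV i))
    _ = #S * (k + 1) := by rw [← sum_mul, ← hfiber]

end Multipartite

theorem sg_balanced_multipartite_lower_general (k m : ℕ) :
    ⌈(2 * k * m : ℚ) / (k + 1)⌉ ≤
      (strongGeodeticNumber (SimpleGraph.completeMultipartiteGraph (fun _ : Fin m => Fin k)) : ℤ) := by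
  obtain ⟨S, hS, hcard⟩ := exists_isStrongGeodeticSet_card_eq
    (completeMultipartiteGraph fun _ : Fin m => Fin k)
  have hbound := hS.two_mul_card_le fun _ => (Fintype.card_fin k).le
  simp only [Fintype.card_sigma, Fintype.card_fin, sum_const, card_univ, smul_eq_mul] at hbound
  rw [← hcard, Int.ceil_le, div_le_iff₀ (by positivity)]
  exact_mod_cast (by linarith : 2 * k * m ≤ #S * (k + 1))

theorem sg_balanced_multipartite_lower (k m : ℕ) (hk : 0 < k) (hm : 0 < m) :
    ⌈(2 * k * m : ℚ) / (k + 1)⌉ ≤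
      (strongGeodeticNumber (SimpleGraph.completeMultipartiteGraph (fun _ : Fin m => Fin k)) : ℤ) :=
  sg_balanced_multipartite_lower_general k m
end
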